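/- Knight's identity: for any real numbers u ≠ 0 and v, ρ_τ(u - v) - ρ_τ(u) = -v·ψ_τ(u) + ∫_0^v [I(u ≤ s) - I(u < 0)] ds, where ψ_τ(u) = τ - I(u < 0). -/

import Mathlib

/-!
Writing `ρ_τ(x) = τ x - min x 0` and integrating the step function `1{u ≤ s}`, whose integral
over `[a, b]` is `max b u - max a u`, both sides become piecewise linear in `u` and `v`, and the
identity reduces to `min u 0 - min (u - v) 0 = max v u - max 0 u`.
-/

noncomputable def rho (τ u : ℝ) : ℝ := u * (τ - if u < 0 then 1 else 0)

open MeasureTheory Set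

lemma rho_eq_mul_sub_min (τ u : ℝ) : rho τ u = τ * u - min u 0 := by
  unfold rho
  split_ifs with h
  · rw [min_eq_left h.le]; ring
  · rw [min_eq_right (not_lt.1 h)]; ring

lemma monotone_step (u : ℝ) : Monotone fun s : ℝ => if u ≤ s then (1 : ℝ) else 0 := by
  intro s t hst
  dsimp only
  split_ifs <;> grind

lemma integral_step_of_le (u : ℝ) {a b : ℝ} (hab : a ≤ b) :
    ∫ s in a..b, (if u ≤ s then (1 : ℝ) else 0) = max b u - max a u := by
  have hind : (fun s : ℝ => if u ≤ s then (1 : ℝ) else 0) = (Ici u).indicator fun _ => 1 := by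
    ext s; simp [indicator_apply]
  have hae : (Ioc a b ∩ Ici u : Set ℝ) =ᵐ[volume] (Ioc a b ∩ Ioi u : Set ℝ) :=
    (ae_eq_refl _).inter Ioi_ae_eq_Ici.symm
  rw [hind, intervalIntegral.integral_of_le hab, setIntegral_indicator measurableSet_Ici,
    setIntegral_const, smul_eq_mul, mul_one, measureReal_congr hae, Ioc_inter_Ioi,
    Real.volume_real_Ioc]
  grind

lemma integral_step (u a b : ℝ) :
    ∫ s in a..b, (if u ≤ s then (1 : ℝ) else 0) = max b u - max a u := by
  rcases le_total a b with h | h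
  · exact integral_step_of_le u h
  · rw [intervalIntegral.integral_symm, integral_step_of_le u h, neg_sub]

theorem knight_identity_general (τ : ℝ) (u v : ℝ) :
    rho τ (u - v) - rho τ u
      = -v * (τ - if u < 0 then 1 else 0)
        + ∫ s in (0:ℝ)..v, ((if u ≤ s then (1:ℝ) else 0) - (if u < 0 then 1 else 0)) := by
  rw [intervalIntegral.integral_sub (monotone_step u).intervalIntegrable intervalIntegrable_const,
    integral_step, intervalIntegral.integral_const, smul_eq_mul, sub_zero,
    rho_eq_mul_sub_min, rho_eq_mul_sub_min]
  have hminmax : min u 0 - min (u - v) 0 = max v u - max 0 u := by grind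
  linear_combination hminmax

theorem knight_identity (τ : ℝ) (hτ : τ ∈ Set.Ioo (0:ℝ) 1) (u v : ℝ) (hu : u ≠ 0) :
    rho τ (u - v) - rho τ u
      = -v * (τ - if u < 0 then 1 else 0)
        + ∫ s in (0:ℝ)..v, ((if u ≤ s then (1:ℝ) else 0) - (if u < 0 then 1 else 0)) :=
  knight_identity_general τ u v
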